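/- Let ρ ∈ [0,1), let u > 0, and let S ⊂ ℝ be a bounded open set with Lebesgue measure |S| < ∞; set d(u,S) := inf_{s ∈ S} |u + s|. Then the integral of the bivariate Gaussian density f_ρ(x,y) = (2π√(1−ρ²))^{-1} · exp(−(x² − 2ρxy + y²)/(2(1−ρ²))) over the set (u+S) × (u+S) is at most (|S|² / (2π√(1−ρ²))) · exp(−d(u,S)²/(1+ρ)). -/

import Mathlib

open MeasureTheory Real

/-!
On `(u + S) × (u + S)` both coordinates satisfy `x², y² ≥ d²` with `d = d(u, S)`. Since
`x² - 2ρxy + y² = (1 - ρ)(x² + y²) + ρ(x - y)²` and `ρ ≥ 0`, the quadratic form is at least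
`2(1 - ρ)d²` there, so the density is bounded by `(2π√(1 - ρ²))⁻¹ exp(-d² / (1 + ρ))` on a set of
measure `|S|²`.
-/

theorem Metric.infDist_neg_sq_le_add_sq {S : Set ℝ} {u s : ℝ} (hs : s ∈ S) :
    infDist (-u) S ^ 2 ≤ (u + s) ^ 2 := by
  have h : infDist (-u) S ≤ |u + s| := by
    simpa [Real.dist_eq, abs_sub_comm, add_comm] using infDist_le_dist_of_mem (x := -u) hs
  simpa only [sq_abs] using pow_le_pow_left₀ infDist_nonneg h 2

theorem two_mul_one_sub_mul_sq_le {ρ d x y : ℝ} (hρ0 : 0 ≤ ρ) (hρ1 : ρ ≤ 1)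
    (hx : d ^ 2 ≤ x ^ 2) (hy : d ^ 2 ≤ y ^ 2) :
    2 * (1 - ρ) * d ^ 2 ≤ x ^ 2 - 2 * ρ * x * y + y ^ 2 :=
  calc 2 * (1 - ρ) * d ^ 2 ≤ (1 - ρ) * (x ^ 2 + y ^ 2) := by nlinarith
    _ ≤ x ^ 2 - 2 * ρ * x * y + y ^ 2 := by nlinarith [mul_nonneg hρ0 (sq_nonneg (x - y))]

theorem exp_neg_quadratic_div_le {ρ d x y : ℝ} (hρ0 : 0 ≤ ρ) (hρ1 : ρ < 1)
    (hx : d ^ 2 ≤ x ^ 2) (hy : d ^ 2 ≤ y ^ 2) :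
    exp (-(x ^ 2 - 2 * ρ * x * y + y ^ 2) / (2 * (1 - ρ ^ 2))) ≤ exp (-d ^ 2 / (1 + ρ)) := by
  have hQ := two_mul_one_sub_mul_sq_le hρ0 hρ1.le hx hy
  have h1 : 0 < 1 - ρ := by linarith
  refine exp_le_exp.mpr ?_
  calc -(x ^ 2 - 2 * ρ * x * y + y ^ 2) / (2 * (1 - ρ ^ 2))
      ≤ -(2 * (1 - ρ) * d ^ 2) / (2 * (1 - ρ ^ 2)) := by gcongr; nlinarith
    _ = -d ^ 2 / (1 + ρ) := by
      rw [show 1 - ρ ^ 2 = (1 - ρ) * (1 + ρ) by ring]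
      field_simp

theorem stmt_0_general (ρ u : ℝ) (hρ0 : 0 ≤ ρ) (hρ1 : ρ < 1)
    (S : Set ℝ) (hSbdd : Bornology.IsBounded S) :
    (∫ p in ((fun s => u + s) '' S) ×ˢ ((fun s => u + s) '' S),
        (2 * π * Real.sqrt (1 - ρ ^ 2))⁻¹ *
          Real.exp (-(p.1 ^ 2 - 2 * ρ * p.1 * p.2 + p.2 ^ 2) / (2 * (1 - ρ ^ 2)))) ≤
      (volume S).toReal ^ 2 / (2 * π * Real.sqrt (1 - ρ ^ 2)) *
        Real.exp (-(Metric.infDist (-u) S) ^ 2 / (1 + ρ)) := by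
  set A := (fun s => u + s) '' S
  have hA : ∀ x ∈ A, Metric.infDist (-u) S ^ 2 ≤ x ^ 2 := by
    rintro _ ⟨s, hs, rfl⟩
    exact Metric.infDist_neg_sq_le_add_sq hs
  have hvolA : volume A = volume S := measure_vadd _ u S
  have hvolAA : volume (A ×ˢ A) < ⊤ := by
    rw [Measure.volume_eq_prod, Measure.prod_prod, hvolA]
    exact ENNReal.mul_lt_top hSbdd.measure_lt_top hSbdd.measure_lt_top
  have hbound : ∀ p ∈ A ×ˢ A, ‖(2 * π * Real.sqrt (1 - ρ ^ 2))⁻¹ *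
      exp (-(p.1 ^ 2 - 2 * ρ * p.1 * p.2 + p.2 ^ 2) / (2 * (1 - ρ ^ 2)))‖ ≤
      (2 * π * Real.sqrt (1 - ρ ^ 2))⁻¹ * exp (-Metric.infDist (-u) S ^ 2 / (1 + ρ)) := by
    rintro p ⟨hx, hy⟩
    rw [Real.norm_of_nonneg (by positivity)]
    exact mul_le_mul_of_nonneg_left (exp_neg_quadratic_div_le hρ0 hρ1 (hA _ hx) (hA _ hy)) (by positivity)
  calc _ ≤ _ := le_abs_self _
    _ ≤ _ := norm_setIntegral_le_of_norm_le_const hvolAA hbound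
    _ = _ := by
      rw [Measure.volume_eq_prod, measureReal_prod_prod, measureReal_def, hvolA]
      ring

/-- Gaussian double-integral bound: for `ρ ∈ [0,1)`, `u > 0` and a bounded open set
`S ⊆ ℝ`, the integral of the standardized bivariate Gaussian density with correlation `ρ`
over `(u+S) × (u+S)` is at most `(|S|²/(2π√(1−ρ²))) · exp(−d(u,S)²/(1+ρ))`,
where `d(u,S) = dist(−u, S) = inf_{s ∈ S} |u+s|`. -/
theorem stmt_0 (ρ u : ℝ) (hρ0 : 0 ≤ ρ) (hρ1 : ρ < 1) (hu : 0 < u)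
    (S : Set ℝ) (hSopen : IsOpen S) (hSbdd : Bornology.IsBounded S) :
    (∫ p in ((fun s => u + s) '' S) ×ˢ ((fun s => u + s) '' S),
        (2 * π * Real.sqrt (1 - ρ ^ 2))⁻¹ *
          Real.exp (-(p.1 ^ 2 - 2 * ρ * p.1 * p.2 + p.2 ^ 2) / (2 * (1 - ρ ^ 2)))) ≤
      (volume S).toReal ^ 2 / (2 * π * Real.sqrt (1 - ρ ^ 2)) *
        Real.exp (-(Metric.infDist (-u) S) ^ 2 / (1 + ρ)) :=
  stmt_0_general ρ u hρ0 hρ1 S hSbdd
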